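/- Let k ≥ 2 be an integer. If τ is a symmetric polynomial matrix whose entries have total degree at most k−1 and rot τ = 0, then there exists a polynomial q of total degree at most k+1 such that τ = ∇²q, the Hessian matrix of q. -/

import Mathlib

/-!
Each row of `τ` is a closed polynomial `1`-form, since `rot τ = 0`, so it is the gradient of a
polynomial `vᵢ`; integrating one variable at a time raises the degree by at most one. By the
symmetry of `τ` the vector field `(v₀, v₁)` is closed as well, hence the gradient of a
polynomial `q`, and then `∂ᵢ∂ⱼ q = ∂ᵢ vⱼ = τⱼᵢ = τᵢⱼ`.
-/

open MvPolynomial Matrix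

/-- Real polynomials in two variables. -/
abbrev P2 := MvPolynomial (Fin 2) ℝ

/-- The matrix `curl v` of a polynomial vector field, defined row-wise:
`(curl v)_{i1} = ∂₂ vᵢ`, `(curl v)_{i2} = -∂₁ vᵢ`. -/
noncomputable def pcurl (v : Fin 2 → P2) : Matrix (Fin 2) (Fin 2) P2 :=
  Matrix.of fun i j =>
    if j = 0 then pderiv (1 : Fin 2) (v i) else -(pderiv (0 : Fin 2) (v i))

/-- `sym curl v := (curl v + (curl v)ᵀ)/2`. -/
noncomputable def psymCurl (v : Fin 2 → P2) : Matrix (Fin 2) (Fin 2) P2 :=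
  (1 / 2 : ℝ) • (pcurl v + (pcurl v)ᵀ)

/-- `div div τ := Σ_{i,j} ∂ᵢ∂ⱼ τ_{ij}`. -/
noncomputable def pdivDiv (τ : Matrix (Fin 2) (Fin 2) P2) : P2 :=
  ∑ i : Fin 2, ∑ j : Fin 2, pderiv i (pderiv j (τ i j))

/-- The matrix `x xᵀ q` with `(i,j)`-entry `Xᵢ · Xⱼ · q`. -/
noncomputable def xxT (q : P2) : Matrix (Fin 2) (Fin 2) P2 :=
  Matrix.of fun i j => X i * X j * q

/-- The polynomial vector `x^⊥ = (X₂, -X₁)`. -/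
noncomputable def xPerp : Fin 2 → P2 := ![X 1, -X 0]

/-- `rot τ`, with components `(rot τ)ᵢ = ∂₁ τ_{i2} - ∂₂ τ_{i1}`. -/
noncomputable def prot (τ : Matrix (Fin 2) (Fin 2) P2) : Fin 2 → P2 :=
  fun i => pderiv (0 : Fin 2) (τ i 1) - pderiv (1 : Fin 2) (τ i 0)

/-- The Hessian matrix `∇²q` with entries `∂ᵢ∂ⱼ q`. -/
noncomputable def phess (q : P2) : Matrix (Fin 2) (Fin 2) P2 :=
  Matrix.of fun i j => pderiv i (pderiv j q)

/-- `sym(x^⊥ ⊗ v)`, the symmetric matrix with `(i,j)`-entry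
`((x^⊥)ᵢ vⱼ + vᵢ (x^⊥)ⱼ)/2`. -/
noncomputable def symTen (v : Fin 2 → P2) : Matrix (Fin 2) (Fin 2) P2 :=
  Matrix.of fun i j => (1 / 2 : ℝ) • (xPerp i * v j + v i * xPerp j)

/-- The gradient matrix `∇v` with entries `(∇v)_{ij} = ∂ⱼ vᵢ`. -/
noncomputable def pgrad (v : Fin 2 → P2) : Matrix (Fin 2) (Fin 2) P2 :=
  Matrix.of fun i j => pderiv j (v i)

/-- The symmetric gradient `def v := (∇v + (∇v)ᵀ)/2`. -/
noncomputable def pdef (v : Fin 2 → P2) : Matrix (Fin 2) (Fin 2) P2 :=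
  (1 / 2 : ℝ) • (pgrad v + (pgrad v)ᵀ)

/-- The matrix `x^⊥ (x^⊥)ᵀ q` with `(i,j)`-entry `(x^⊥)ᵢ (x^⊥)ⱼ q`. -/
noncomputable def xPerpxPerpT (q : P2) : Matrix (Fin 2) (Fin 2) P2 :=
  Matrix.of fun i j => xPerp i * xPerp j * q

/-- `rot rot τ := ∂₁(rot τ)₂ − ∂₂(rot τ)₁`. -/
noncomputable def protRot (τ : Matrix (Fin 2) (Fin 2) P2) : P2 :=
  pderiv (0 : Fin 2) (prot τ 1) - pderiv (1 : Fin 2) (prot τ 0)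

namespace MvPolynomial

section Pderiv

variable {σ R : Type*} [CommSemiring R]

theorem totalDegree_pderiv_le (i : σ) (p : MvPolynomial σ R) :
    (pderiv i p).totalDegree ≤ p.totalDegree - 1 := by
  refine Finset.sup_le fun m hm => ?_
  have hcoeff : coeff (m + Finsupp.single i 1) p ≠ 0 := by
    intro h0
    rw [mem_support_iff, coeff_pderiv, h0, zero_mul] at hm
    exact hm rfl
  have hdeg := le_totalDegree (mem_support_iff.mpr hcoeff)
  rw [Finsupp.sum_add_index' (fun _ => rfl) (fun _ _ _ => rfl),
    Finsupp.sum_single_index rfl] at hdeg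
  omega

end Pderiv

section Antideriv

variable {σ K : Type*} [Field K]

noncomputable def antideriv (i : σ) : MvPolynomial σ K →ₗ[K] MvPolynomial σ K :=
  (basisMonomials σ K).constr K fun m => monomial (m + Finsupp.single i 1) (m i + 1 : K)⁻¹

theorem antideriv_monomial (i : σ) (m : σ →₀ ℕ) (c : K) :
    antideriv i (monomial m c) = monomial (m + Finsupp.single i 1) ((m i + 1 : K)⁻¹ * c) := by
  have hbasis : monomial m c = c • basisMonomials σ K m := by
    rw [coe_basisMonomials, smul_monomial, smul_eq_mul, mul_one]
  rw [hbasis, map_smul, antideriv, Module.Basis.constr_basis, smul_monomial, smul_eq_mul, mul_comm]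

theorem pderiv_antideriv_of_ne {i j : σ} (hij : i ≠ j) (p : MvPolynomial σ K) :
    pderiv j (antideriv i p) = antideriv i (pderiv j p) := by
  classical
  induction p using MvPolynomial.induction_on' with
  | monomial m c =>
    rw [antideriv_monomial, pderiv_monomial, pderiv_monomial, antideriv_monomial]
    have hexp : m + Finsupp.single i 1 - Finsupp.single j 1
        = m - Finsupp.single j 1 + Finsupp.single i 1 := by
      ext a
      simp only [Finsupp.add_apply, Finsupp.tsub_apply, Finsupp.single_apply]
      split_ifs <;> grind
    simp only [hexp, Finsupp.add_apply, Finsupp.tsub_apply, Finsupp.single_apply, hij,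
      hij.symm, if_false, add_zero, tsub_zero, mul_assoc]
  | add p q hp hq => simp only [map_add, hp, hq]

theorem totalDegree_antideriv_le (i : σ) (p : MvPolynomial σ K) :
    (antideriv i p).totalDegree ≤ p.totalDegree + 1 := by
  conv_lhs => rw [p.as_sum, map_sum]
  refine (totalDegree_finsetSum _ _).trans (Finset.sup_le fun m hm => ?_)
  rw [antideriv_monomial]
  refine (totalDegree_monomial_le _ _).trans ?_
  rw [Finsupp.sum_add_index' (fun _ => rfl) (fun _ _ _ => rfl),
    Finsupp.sum_single_index rfl]
  exact Nat.add_le_add_right (le_totalDegree hm) 1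

variable [CharZero K]

theorem pderiv_antideriv (i : σ) (p : MvPolynomial σ K) : pderiv i (antideriv i p) = p := by
  classical
  induction p using MvPolynomial.induction_on' with
  | monomial m c =>
    rw [antideriv_monomial, pderiv_monomial, add_tsub_cancel_right, Finsupp.add_apply,
      Finsupp.single_eq_same, Nat.cast_add_one, mul_right_comm,
      inv_mul_cancel₀ (Nat.cast_add_one_ne_zero _), one_mul]
  | add p q hp hq => rw [map_add, map_add, hp, hq]

theorem exists_pderiv_eq_of_pderiv_eq {i j : σ} (hij : i ≠ j) {f g : MvPolynomial σ K} {n : ℕ}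
    (hf : f.totalDegree ≤ n) (hg : g.totalDegree ≤ n) (hfg : pderiv i g = pderiv j f) :
    ∃ q : MvPolynomial σ K, pderiv i q = f ∧ pderiv j q = g ∧ q.totalDegree ≤ n + 1 := by
  set r := g - pderiv j (antideriv i f)
  have hr : pderiv i r = 0 := by
    rw [map_sub, hfg, pderiv_antideriv_of_ne hij, pderiv_antideriv, sub_self]
  have hr_deg : r.totalDegree ≤ n := by
    have hpderiv_deg := (totalDegree_pderiv_le j _).trans
      (Nat.sub_le_sub_right (totalDegree_antideriv_le i f) 1)
    exact (totalDegree_sub _ _).trans (max_le hg (by omega))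
  refine ⟨antideriv i f + antideriv j r, ?_, ?_, ?_⟩
  · rw [map_add, pderiv_antideriv, pderiv_antideriv_of_ne hij.symm, hr, map_zero, add_zero]
  · rw [map_add, pderiv_antideriv, add_sub_cancel]
  · refine (totalDegree_add _ _).trans (max_le ?_ ?_)
    · exact (totalDegree_antideriv_le i f).trans (by omega)
    · exact (totalDegree_antideriv_le j r).trans (by omega)

end Antideriv

end MvPolynomial

theorem exists_phess_eq_of_prot_eq_zero {τ : Matrix (Fin 2) (Fin 2) P2} {n : ℕ}
    (hsym : τᵀ = τ) (hdeg : ∀ i j, (τ i j).totalDegree ≤ n) (h : prot τ = 0) :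
    ∃ q : P2, q.totalDegree ≤ n + 2 ∧ τ = phess q := by
  have h01 : (0 : Fin 2) ≠ 1 := by decide
  have hrow (i : Fin 2) : pderiv 0 (τ i 1) = pderiv 1 (τ i 0) := sub_eq_zero.mp (congrFun h i)
  obtain ⟨v₀, hv₀₀, hv₀₁, hv₀⟩ := exists_pderiv_eq_of_pderiv_eq h01 (hdeg 0 0) (hdeg 0 1) (hrow 0)
  obtain ⟨v₁, hv₁₀, hv₁₁, hv₁⟩ := exists_pderiv_eq_of_pderiv_eq h01 (hdeg 1 0) (hdeg 1 1) (hrow 1)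
  have hτ : τ 1 0 = τ 0 1 := congrFun₂ hsym 0 1
  obtain ⟨q, hq₀, hq₁, hq⟩ := exists_pderiv_eq_of_pderiv_eq h01 hv₀ hv₁ (by rw [hv₁₀, hτ, hv₀₁])
  refine ⟨q, hq, ?_⟩
  ext i j
  fin_cases i <;> fin_cases j <;> simp [phess, hq₀, hq₁, hv₀₀, hv₀₁, hv₁₀, hv₁₁, hτ]

/-- A symmetric polynomial matrix of degree ≤ k−1 with `rot τ = 0` is the
Hessian of a polynomial of degree ≤ k+1. -/
theorem stmt_12 (k : ℕ) (hk : 2 ≤ k) (τ : Matrix (Fin 2) (Fin 2) P2)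
    (hsym : τᵀ = τ) (hdeg : ∀ i j, (τ i j).totalDegree ≤ k - 1)
    (h : prot τ = 0) :
    ∃ q : P2, q.totalDegree ≤ k + 1 ∧ τ = phess q := by
  obtain ⟨q, hq, rfl⟩ := exists_phess_eq_of_prot_eq_zero hsym hdeg h
  exact ⟨q, by omega, rfl⟩
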